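/- Let f : [0,1] → ℝ be a continuous function, let t₀ ∈ [0,1] be such that f(t₀) ≠ 0, and let Z = {Z(t)}_{t∈[0,1]} be a real-valued stochastic process such that for all t₁, t₂ ∈ [0,1], the increment Z(t₁) − Z(t₂) has the centered Gaussian law N(0, ∫_{min(t₁,t₂)}^{max(t₁,t₂)} f(s)² ds). Then almost surely, for every ε > 0 there exists a sequence (r_k)_{k∈ℕ} of nonzero real numbers converging to 0, with t₀ + r_k ∈ [0,1] for all k, such that |Z(t₀ + r_k) − Z(t₀)| / |r_k|^{1/2 + ε} → +∞ as k → ∞. In particular, with probability 1 the pointwise Hölder exponent of Z at t₀ is at most 1/2. -/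

import Mathlib

/-!
Near `t₀` the increment `Z (t₀ + r) - Z t₀` is a centred Gaussian of variance at least `c |r|`,
and a centred Gaussian of variance `v` lies in `[-a, a]` with probability at most `a / √v`.
Along `r n = ±κ e^{-n}` the events `|Z (t₀ + r n) - Z t₀| ≤ √(v n) / n²` therefore have summable
probabilities, so by Borel–Cantelli, almost surely, `|Z (t₀ + r n) - Z t₀| ≥ √(c κ e^{-n}) / n²`
eventually. Divided by `|r n| ^ (1/2 + ε)` this grows like `e^{εn} / n²`, for all `ε > 0` at once,
and a Hölder exponent `ρ > 1/2` would contradict it for `ε = ρ - 1/2`.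
-/

open MeasureTheory ProbabilityTheory Set Filter

/-- The pointwise Hölder exponent of `Y : ℝ → ℝ` at `t₀`, relative to the interval `[0,1]`:
`ρ_Y(t₀) = sup {ρ ∈ [0,1] : (Y(t₀+h) − Y(t₀))/|h|^ρ → 0 as h → 0, h ≠ 0, t₀+h ∈ [0,1]}`
(with the convention `sup ∅ = 0`, which is `Real.sSup`'s convention). -/
noncomputable def pointwiseHolderExp (Y : ℝ → ℝ) (t₀ : ℝ) : ℝ :=
  sSup {ρ : ℝ | ρ ∈ Set.Icc (0 : ℝ) 1 ∧
    Tendsto (fun h : ℝ => (Y (t₀ + h) - Y t₀) / |h| ^ ρ)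
      (nhdsWithin 0 {h : ℝ | h ≠ 0 ∧ t₀ + h ∈ Set.Icc (0 : ℝ) 1}) (nhds 0)}

open Real Topology
open scoped NNReal ENNReal

namespace ProbabilityTheory

lemma gaussianPDFReal_le_inv_sqrt (μ : ℝ) (v : ℝ≥0) (x : ℝ) :
    gaussianPDFReal μ v x ≤ (√(2 * π * v))⁻¹ := by
  rw [gaussianPDFReal]
  refine mul_le_of_le_one_right (by positivity) (exp_le_one_iff.2 ?_)
  exact div_nonpos_of_nonpos_of_nonneg (neg_nonpos.2 (sq_nonneg _)) (by positivity)

lemma gaussianReal_le_mul_volume (μ : ℝ) {v : ℝ≥0} (hv : v ≠ 0) (s : Set ℝ) :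
    gaussianReal μ v s ≤ ENNReal.ofReal (√(2 * π * v))⁻¹ * volume s := by
  rw [gaussianReal_apply μ hv, ← setLIntegral_const]
  exact lintegral_mono fun x => ENNReal.ofReal_le_ofReal (gaussianPDFReal_le_inv_sqrt μ v x)

lemma gaussianReal_Icc_le (μ : ℝ) {v : ℝ≥0} (hv : v ≠ 0) {a : ℝ} (ha : 0 ≤ a) :
    gaussianReal μ v (Icc (μ - a) (μ + a)) ≤ ENNReal.ofReal (a / √v) := by
  refine (gaussianReal_le_mul_volume μ hv _).trans ?_
  rw [volume_Icc, ← ENNReal.ofReal_mul (by positivity)]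
  refine ENNReal.ofReal_le_ofReal ?_
  have h2π : 2 ≤ √(2 * π) := le_sqrt_of_sq_le (by nlinarith [pi_gt_three])
  calc (√(2 * π * v))⁻¹ * (μ + a - (μ - a)) = a / √v * (2 / √(2 * π)) := by
        rw [sqrt_mul (by positivity)]; ring
    _ ≤ a / √v := mul_le_of_le_one_right (by positivity) ((div_le_one (by positivity)).2 h2π)

lemma ae_eventually_lt_abs_of_map_eq_gaussianReal {Ω : Type*} [MeasurableSpace Ω]
    {P : Measure Ω} {X : ℕ → Ω → ℝ} {v : ℕ → ℝ≥0} {w : ℕ → ℝ}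
    (hX : ∀ n, AEMeasurable (X n) P) (hlaw : ∀ n, P.map (X n) = gaussianReal 0 (v n))
    (hv : ∀ n, v n ≠ 0) (hw : Summable w) (hw0 : ∀ n, 0 ≤ w n) :
    ∀ᵐ ω ∂P, ∀ᶠ n in atTop, √(v n) * w n < |X n ω| := by
  set A : ℕ → Set Ω := fun n => X n ⁻¹' Icc (-(√(v n) * w n)) (√(v n) * w n)
  have hA : ∀ n, P (A n) ≤ ENNReal.ofReal (w n) := fun n => by
    have hsv : 0 < √(v n : ℝ) := sqrt_pos.2 (by simpa [pos_iff_ne_zero] using hv n)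
    rw [← Measure.map_apply_of_aemeasurable (hX n) measurableSet_Icc, hlaw n]
    simpa [hsv.ne'] using gaussianReal_Icc_le 0 (hv n) (mul_nonneg hsv.le (hw0 n))
  have hsum : ∑' n, P (A n) ≠ ∞ := by
    refine ne_top_of_le_ne_top ?_ (ENNReal.tsum_le_tsum hA)
    rw [← ENNReal.ofReal_tsum_of_nonneg hw0 hw]
    exact ENNReal.ofReal_ne_top
  filter_upwards [ae_eventually_notMem hsum] with ω hω
  filter_upwards [hω] with n hn
  rw [← not_le, abs_le]
  exact hn

end ProbabilityTheory

lemma exists_mul_abs_sub_le_integral {g : ℝ → ℝ} {s : Set ℝ} [s.OrdConnected] {t₀ : ℝ}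
    (hg : ContinuousOn g s) (ht₀ : t₀ ∈ s) (hpos : 0 < g t₀) :
    ∃ δ > 0, ∃ c > 0, ∀ t ∈ s, |t - t₀| < δ →
      c * |t - t₀| ≤ ∫ u in min t t₀..max t t₀, g u := by
  obtain ⟨δ, hδ, hnear⟩ :=
    Metric.mem_nhdsWithin_iff.1 (hg t₀ ht₀ (Ioi_mem_nhds (half_lt_self hpos)))
  refine ⟨δ, hδ, g t₀ / 2, half_pos hpos, fun t ht htδ => ?_⟩
  have hsub : uIcc t t₀ ⊆ s := Set.OrdConnected.uIcc_subset ‹_› ht ht₀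
  have hbound : ∀ u ∈ Icc (min t t₀) (max t t₀), g t₀ / 2 ≤ g u := fun u hu => by
    have hu' : u ∈ uIcc t₀ t := by rwa [uIcc_comm]
    refine le_of_lt <| hnear ⟨?_, hsub hu⟩
    rw [Metric.mem_ball, dist_comm]
    exact (Real.dist_left_le_of_mem_uIcc hu').trans_lt (by rwa [Real.dist_eq, abs_sub_comm])
  have h := intervalIntegral.integral_mono_on min_le_max
    (intervalIntegrable_const (μ := volume)) ((hg.mono hsub).intervalIntegrable_of_Icc min_le_max)
    hbound
  rwa [intervalIntegral.integral_const, smul_eq_mul, max_sub_min_eq_abs, abs_sub_comm,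
    mul_comm] at h

lemma exists_ne_zero_forall_mem_Icc {a b t₀ δ : ℝ} (hab : a < b) (ht₀ : t₀ ∈ Icc a b)
    (hδ : 0 < δ) : ∃ h ≠ 0, |h| < δ ∧ ∀ θ ∈ Icc (0 : ℝ) 1, t₀ + θ * h ∈ Icc a b := by
  set ℓ := min (δ / 2) ((b - a) / 2)
  have hℓ : 0 < ℓ := lt_min (half_pos hδ) (by linarith)
  have hℓδ : ℓ < δ := (min_le_left _ _).trans_lt (half_lt_self hδ)
  have hℓab : ℓ ≤ (b - a) / 2 := min_le_right _ _
  obtain ⟨ha, hb⟩ := ht₀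
  rcases le_total t₀ ((a + b) / 2) with hmid | hmid
  · refine ⟨ℓ, hℓ.ne', by rwa [abs_of_pos hℓ], fun θ ⟨hθ0, hθ1⟩ => ⟨?_, ?_⟩⟩ <;> nlinarith
  · refine ⟨-ℓ, neg_ne_zero.2 hℓ.ne', by rwa [abs_neg, abs_of_pos hℓ],
      fun θ ⟨hθ0, hθ1⟩ => ⟨?_, ?_⟩⟩ <;> nlinarith

lemma exists_seq_mul_abs_le_integral {g : ℝ → ℝ} {a b t₀ : ℝ} (hab : a < b)
    (hg : ContinuousOn g (Icc a b)) (ht₀ : t₀ ∈ Icc a b) (hpos : 0 < g t₀) :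
    ∃ c > 0, ∃ κ > 0, ∃ r : ℕ → ℝ, (∀ n, |r n| = κ * exp (-n)) ∧ (∀ n, t₀ + r n ∈ Icc a b) ∧
      ∀ n, c * |r n| ≤ ∫ u in min (t₀ + r n) t₀..max (t₀ + r n) t₀, g u := by
  obtain ⟨δ, hδ, c, hc, hvar⟩ := exists_mul_abs_sub_le_integral hg ht₀ hpos
  obtain ⟨h, hh, hhδ, hseg⟩ := exists_ne_zero_forall_mem_Icc hab ht₀ hδ
  have hexp_le : ∀ n : ℕ, exp (-n) ≤ 1 := fun n => exp_le_one_iff.2 (by simp)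
  have hr_abs : ∀ n : ℕ, |exp (-n) * h| = |h| * exp (-n) := fun n => by
    rw [abs_mul, abs_of_pos (exp_pos _), mul_comm]
  have hr_mem : ∀ n : ℕ, t₀ + exp (-n) * h ∈ Icc a b := fun n =>
    hseg _ ⟨(exp_pos _).le, hexp_le n⟩
  refine ⟨c, hc, |h|, abs_pos.2 hh, fun n => exp (-n) * h, hr_abs, hr_mem, fun n => ?_⟩
  have hrδ : |exp (-n) * h| < δ := by
    rw [hr_abs]; exact (mul_le_of_le_one_right (abs_nonneg h) (hexp_le n)).trans_lt hhδ
  simpa using hvar _ (hr_mem n) (by rwa [add_sub_cancel_left])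

lemma tendsto_div_rpow_exp_neg_atTop {K κ ε : ℝ} (hK : 0 < K) (hκ : 0 < κ) (hε : 0 < ε)
    {y : ℕ → ℝ} (hy : ∀ᶠ n : ℕ in atTop, K * √(κ * exp (-n)) / (n : ℝ) ^ 2 ≤ y n) :
    Tendsto (fun n : ℕ => y n / (κ * exp (-n)) ^ ((1 : ℝ) / 2 + ε)) atTop atTop := by
  have hlim : Tendsto (fun n : ℕ => K / κ ^ ε * (exp (ε * n) / (n : ℝ) ^ (2 : ℝ))) atTop atTop :=
    ((tendsto_exp_mul_div_rpow_atTop 2 ε hε).comp tendsto_natCast_atTop_atTop).const_mul_atTop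
      (by positivity)
  refine tendsto_atTop_mono' atTop ?_ hlim
  filter_upwards [hy] with n hn
  have hs : 0 < κ * exp (-n) := by positivity
  have hsplit : (κ * exp (-n)) ^ ((1 : ℝ) / 2 + ε) = √(κ * exp (-n)) * (κ ^ ε / exp (ε * n)) := by
    rw [rpow_add hs, ← sqrt_eq_rpow, mul_rpow hκ.le (exp_pos _).le, ← exp_mul, neg_mul,
      mul_comm _ ε, exp_neg (ε * n), div_eq_mul_inv]
  calc K / κ ^ ε * (exp (ε * n) / (n : ℝ) ^ (2 : ℝ))
      = K * √(κ * exp (-n)) / (n : ℝ) ^ 2 / (κ * exp (-n)) ^ ((1 : ℝ) / 2 + ε) := by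
        rw [hsplit, rpow_two]
        have := sqrt_pos.2 hs
        field_simp
    _ ≤ y n / (κ * exp (-n)) ^ ((1 : ℝ) / 2 + ε) := by gcongr

lemma pointwiseHolderExp_le {Y : ℝ → ℝ} {t₀ α : ℝ} (hα : 0 ≤ α)
    (h : ∀ ε : ℝ, 0 < ε → ∃ r : ℕ → ℝ, (∀ k, r k ≠ 0) ∧ Tendsto r atTop (𝓝 0) ∧
      (∀ k, t₀ + r k ∈ Icc (0 : ℝ) 1) ∧
      Tendsto (fun k => |Y (t₀ + r k) - Y t₀| / |r k| ^ (α + ε)) atTop atTop) :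
    pointwiseHolderExp Y t₀ ≤ α := by
  refine Real.sSup_le (fun ρ ⟨_, hρ⟩ => ?_) hα
  by_contra! hαρ
  obtain ⟨r, hr0, hr, hr_mem, hblow⟩ := h (ρ - α) (sub_pos.2 hαρ)
  rw [add_sub_cancel] at hblow
  have hr' : Tendsto r atTop (𝓝[{h | h ≠ 0 ∧ t₀ + h ∈ Icc 0 1}] 0) :=
    tendsto_nhdsWithin_of_tendsto_nhds_of_eventually_within _ hr
      (Eventually.of_forall fun k => ⟨hr0 k, hr_mem k⟩)
  have hzero := (hρ.comp hr').abs
  simp only [Function.comp_def, abs_div, abs_of_nonneg (rpow_nonneg (abs_nonneg _) _), abs_zero]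
    at hzero
  exact not_tendsto_nhds_of_tendsto_atTop hblow 0 hzero

theorem statement5 {Ω : Type*} [MeasurableSpace Ω] (P : Measure Ω)
    (f : ℝ → ℝ) (hf : ContinuousOn f (Set.Icc 0 1))
    (t₀ : ℝ) (ht₀ : t₀ ∈ Set.Icc (0 : ℝ) 1) (hft₀ : f t₀ ≠ 0)
    (Z : ℝ → Ω → ℝ) (hZmeas : ∀ t, Measurable (Z t))
    (hlaw : ∀ t₁ ∈ Set.Icc (0 : ℝ) 1, ∀ t₂ ∈ Set.Icc (0 : ℝ) 1,
      Measure.map (fun ω => Z t₁ ω - Z t₂ ω) P =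
        gaussianReal 0 (∫ s in min t₁ t₂..max t₁ t₂, (f s) ^ 2).toNNReal) :
    ∀ᵐ ω ∂P,
      (∀ ε : ℝ, 0 < ε →
        ∃ r : ℕ → ℝ, (∀ k, r k ≠ 0) ∧ Tendsto r atTop (nhds 0) ∧
          (∀ k, t₀ + r k ∈ Set.Icc (0 : ℝ) 1) ∧
          Tendsto
            (fun k => |Z (t₀ + r k) ω - Z t₀ ω| / |r k| ^ ((1 : ℝ) / 2 + ε))
            atTop atTop) ∧
      pointwiseHolderExp (fun t => Z t ω) t₀ ≤ 1 / 2 := by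
  obtain ⟨c, hc, κ, hκ, r, hr_abs, hr_mem, hvar⟩ :=
    exists_seq_mul_abs_le_integral zero_lt_one (hf.pow 2) ht₀ (pow_two_pos_of_ne_zero hft₀)
  have hr0 : ∀ n, r n ≠ 0 := fun n => abs_pos.1 (by rw [hr_abs]; positivity)
  have hr : Tendsto r atTop (𝓝 0) := (tendsto_zero_iff_abs_tendsto_zero r).2 <| by
    simpa [Function.comp_def, hr_abs] using
      (tendsto_exp_neg_atTop_nhds_zero.comp tendsto_natCast_atTop_atTop).const_mul κ
  set v : ℕ → ℝ≥0 := fun n => (∫ s in min (t₀ + r n) t₀..max (t₀ + r n) t₀, f s ^ 2).toNNReal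
  have hv : ∀ n, c * |r n| ≤ v n := fun n => (hvar n).trans (Real.le_coe_toNNReal _)
  have hgauss := ae_eventually_lt_abs_of_map_eq_gaussianReal
    (X := fun n ω => Z (t₀ + r n) ω - Z t₀ ω) (v := v) (w := fun n => 1 / (n : ℝ) ^ 2)
    (fun n => ((hZmeas _).sub (hZmeas _)).aemeasurable) (fun n => hlaw _ (hr_mem n) _ ht₀)
    (fun n => NNReal.coe_ne_zero.1 ((mul_pos hc (abs_pos.2 (hr0 n))).trans_le (hv n)).ne')
    (Real.summable_one_div_nat_pow.2 one_lt_two) (fun n => by positivity)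
  filter_upwards [hgauss] with ω hω
  have hblow : ∀ ε : ℝ, 0 < ε → Tendsto
      (fun k => |Z (t₀ + r k) ω - Z t₀ ω| / |r k| ^ ((1 : ℝ) / 2 + ε)) atTop atTop := by
    intro ε hε
    simp only [hr_abs]
    refine tendsto_div_rpow_exp_neg_atTop (sqrt_pos.2 hc) hκ hε ?_
    filter_upwards [hω] with n hn
    calc √c * √(κ * exp (-n)) / (n : ℝ) ^ 2 = √(c * |r n|) * (1 / (n : ℝ) ^ 2) := by
          rw [hr_abs, sqrt_mul hc.le]; ring
      _ ≤ √(v n) * (1 / (n : ℝ) ^ 2) := by gcongr; exact hv n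
      _ ≤ _ := hn.le
  exact ⟨fun ε hε => ⟨r, hr0, hr, hr_mem, hblow ε hε⟩,
    pointwiseHolderExp_le one_half_pos.le fun ε hε => ⟨r, hr0, hr, hr_mem, hblow ε hε⟩⟩
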